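/- Let E₁, E₂, E₃ be real inner product spaces, let t₁, t₂, t₃ > 0 and let ε > 0. Then the function f : E₁ × E₂ × E₃ → ℝ defined by f(x₁, x₂, x₃) = √(t₁‖x₁‖² + t₂‖x₂‖² + t₃‖x₃‖² + ε·√(‖x₁‖⁴ + ‖x₂‖⁴ + ‖x₃‖⁴)) is a norm on E₁ × E₂ × E₃: it is positive definite, absolutely homogeneous, and satisfies the triangle inequality. -/

import Mathlib

/-!
With `aᵢ = ‖xᵢ‖`, the square of `f` is `∑ tᵢ aᵢ² + ε ‖(aᵢ²)ᵢ‖₂`, and the ℓ²-norm of the squares is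
the maximum of `∑ uᵢ aᵢ²` over nonnegative unit vectors `u`. So `f` is the maximum of the weighted
ℓ²-norms `√(∑ (tᵢ + ε uᵢ) aᵢ²)`, each of which is subadditive by Minkowski and monotone in the `aᵢ`.
For `f (x + y) ≤ f x + f y` it suffices to take the weights at which the maximum for `x + y` is
attained.
-/

open Finset Real

section

variable {ι : Type*} [Fintype ι]

theorem sqrt_sum_mul_add_sq_le {d : ι → ℝ} (hd : ∀ i, 0 ≤ d i) (a b : ι → ℝ) :
    √(∑ i, d i * (a i + b i) ^ 2) ≤ √(∑ i, d i * a i ^ 2) + √(∑ i, d i * b i ^ 2) := by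
  let toL2 (v : ι → ℝ) : EuclideanSpace ℝ ι := WithLp.toLp 2 fun i ↦ √(d i) * v i
  have hnorm (v : ι → ℝ) : ‖toL2 v‖ = √(∑ i, d i * v i ^ 2) := by
    simp only [toL2, EuclideanSpace.norm_eq, Real.norm_eq_abs, sq_abs, mul_pow, sq_sqrt (hd _)]
  have hadd : toL2 (a + b) = toL2 a + toL2 b := congrArg _ (funext fun i ↦ mul_add _ _ _)
  calc √(∑ i, d i * (a i + b i) ^ 2) = ‖toL2 a + toL2 b‖ := by rw [← hadd, hnorm]; rfl
    _ ≤ ‖toL2 a‖ + ‖toL2 b‖ := norm_add_le _ _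
    _ = _ := by rw [hnorm, hnorm]

theorem exists_sum_mul_sq_eq_sqrt_sum_pow_four (c : ι → ℝ) :
    ∃ u : ι → ℝ, (∀ i, 0 ≤ u i) ∧ ∑ i, u i * c i ^ 2 = √(∑ i, c i ^ 4) ∧
      ∀ w : ι → ℝ, ∑ i, u i * w i ^ 2 ≤ √(∑ i, w i ^ 4) := by
  set S := √(∑ i, c i ^ 4)
  -- `u = c² / S`, which is `0` when `c = 0` since `x / 0 = 0`.
  have hS2 : ∑ i, c i ^ 4 = S ^ 2 := (sq_sqrt (by positivity)).symm
  refine ⟨fun i ↦ c i ^ 2 / S, fun i ↦ by positivity, ?_, fun w ↦ ?_⟩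
  · simp only [div_mul_eq_mul_div, ← pow_add, ← sum_div]
    rw [hS2, sq, mul_self_div_self]
  · have hu : ∑ i, (c i ^ 2 / S) ^ 2 ≤ 1 := by
      simp only [div_pow, ← pow_mul, ← sum_div]
      rw [hS2]
      exact div_self_le_one _
    calc ∑ i, c i ^ 2 / S * w i ^ 2
        ≤ √(∑ i, (c i ^ 2 / S) ^ 2) * √(∑ i, (w i ^ 2) ^ 2) := sum_mul_le_sqrt_mul_sqrt _ _ _
      _ ≤ 1 * √(∑ i, w i ^ 4) := by
          simp only [← pow_mul]
          gcongr
          exact sqrt_le_one.mpr hu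
      _ = _ := one_mul _

noncomputable def quarticPerturbedForm (t : ι → ℝ) (ε : ℝ) (a : ι → ℝ) : ℝ :=
  ∑ i, t i * a i ^ 2 + ε * √(∑ i, a i ^ 4)

theorem quarticPerturbedForm_smul (t : ι → ℝ) (ε r : ℝ) (a : ι → ℝ) :
    quarticPerturbedForm t ε (r • a) = r ^ 2 * quarticPerturbedForm t ε a := by
  have h4 : ∑ i, (r * a i) ^ 4 = (r ^ 2) ^ 2 * ∑ i, a i ^ 4 := by
    rw [mul_sum]; exact sum_congr rfl fun i _ ↦ by ring
  simp only [quarticPerturbedForm, Pi.smul_apply, smul_eq_mul]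
  rw [h4, sqrt_mul (sq_nonneg _), sqrt_sq (sq_nonneg r), mul_add, mul_sum]
  congr 1
  · exact sum_congr rfl fun i _ ↦ by ring
  · ring

theorem quarticPerturbedForm_pos {t : ι → ℝ} (ht : ∀ i, 0 < t i) {ε : ℝ} (hε : 0 ≤ ε)
    {a : ι → ℝ} (ha : a ≠ 0) : 0 < quarticPerturbedForm t ε a := by
  obtain ⟨i, hi⟩ := Function.ne_iff.mp ha
  have hquad : 0 < ∑ i, t i * a i ^ 2 :=
    sum_pos' (fun j _ ↦ mul_nonneg (ht j).le (sq_nonneg _))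
      ⟨i, mem_univ _, mul_pos (ht i) (pow_two_pos_of_ne_zero hi)⟩
  exact add_pos_of_pos_of_nonneg hquad (by positivity)

theorem sqrt_quarticPerturbedForm_le_add {t : ι → ℝ} (ht : ∀ i, 0 ≤ t i) {ε : ℝ} (hε : 0 ≤ ε)
    {a b c : ι → ℝ} (hc : 0 ≤ c) (hcab : c ≤ a + b) :
    √(quarticPerturbedForm t ε c) ≤
      √(quarticPerturbedForm t ε a) + √(quarticPerturbedForm t ε b) := by
  obtain ⟨u, hu, hu_eq, hu_le⟩ := exists_sum_mul_sq_eq_sqrt_sum_pow_four c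
  set d : ι → ℝ := fun i ↦ t i + ε * u i
  have hd : ∀ i, 0 ≤ d i := fun i ↦ by have := ht i; have := hu i; positivity
  have hsplit (w : ι → ℝ) : ∑ i, d i * w i ^ 2 = ∑ i, t i * w i ^ 2 + ε * ∑ i, u i * w i ^ 2 := by
    simp only [d, add_mul, sum_add_distrib, mul_assoc, mul_sum]
  have hle (w : ι → ℝ) : ∑ i, d i * w i ^ 2 ≤ quarticPerturbedForm t ε w := by
    rw [hsplit, quarticPerturbedForm]; gcongr; exact hu_le w
  calc √(quarticPerturbedForm t ε c) = √(∑ i, d i * c i ^ 2) := by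
        rw [hsplit, hu_eq, quarticPerturbedForm]
    _ ≤ √(∑ i, d i * (a i + b i) ^ 2) := by
        gcongr with i
        · exact hd i
        · exact hc i
        · exact hcab i
    _ ≤ √(∑ i, d i * a i ^ 2) + √(∑ i, d i * b i ^ 2) := sqrt_sum_mul_add_sq_le hd a b
    _ ≤ _ := by gcongr <;> exact hle _

end

/-- For real inner product spaces `E₁`, `E₂`, `E₃`, positive reals `t₁, t₂, t₃` and
`ε > 0`, the function
`f (x₁, x₂, x₃) = √(t₁‖x₁‖² + t₂‖x₂‖² + t₃‖x₃‖² + ε √(‖x₁‖⁴ + ‖x₂‖⁴ + ‖x₃‖⁴))`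
is a norm on `E₁ × E₂ × E₃`. -/
theorem perturbed_norm_three_factors {E₁ E₂ E₃ : Type*}
    [NormedAddCommGroup E₁] [InnerProductSpace ℝ E₁]
    [NormedAddCommGroup E₂] [InnerProductSpace ℝ E₂]
    [NormedAddCommGroup E₃] [InnerProductSpace ℝ E₃]
    (t₁ t₂ t₃ ε : ℝ) (ht₁ : 0 < t₁) (ht₂ : 0 < t₂) (ht₃ : 0 < t₃) (hε : 0 < ε)
    (f : E₁ × E₂ × E₃ → ℝ)
    (hf : ∀ x : E₁ × E₂ × E₃,
      f x = Real.sqrt (t₁ * ‖x.1‖ ^ 2 + t₂ * ‖x.2.1‖ ^ 2 + t₃ * ‖x.2.2‖ ^ 2 +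
        ε * Real.sqrt (‖x.1‖ ^ 4 + ‖x.2.1‖ ^ 4 + ‖x.2.2‖ ^ 4))) :
    (f 0 = 0) ∧ (∀ x : E₁ × E₂ × E₃, x ≠ 0 → 0 < f x) ∧
    (∀ (c : ℝ) (x : E₁ × E₂ × E₃), f (c • x) = |c| * f x) ∧
    (∀ x y : E₁ × E₂ × E₃, f (x + y) ≤ f x + f y) := by
  set t : Fin 3 → ℝ := ![t₁, t₂, t₃]
  set ν : E₁ × E₂ × E₃ → Fin 3 → ℝ := fun x ↦ ![‖x.1‖, ‖x.2.1‖, ‖x.2.2‖]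
  have ht : ∀ i, 0 < t i := fun i ↦ by fin_cases i <;> assumption
  have hfν (x) : f x = √(quarticPerturbedForm t ε (ν x)) := by
    simp [hf, quarticPerturbedForm, Fin.sum_univ_three, t, ν, add_assoc]
  refine ⟨by simp [hf], fun x hx ↦ ?_, fun c x ↦ ?_, fun x y ↦ ?_⟩
  · have hνx : ν x ≠ 0 := fun h ↦ hx <| by
      simpa [ν, funext_iff, Fin.forall_fin_succ, Prod.ext_iff] using h
    rw [hfν]
    exact sqrt_pos.mpr (quarticPerturbedForm_pos ht hε.le hνx)
  · have hνc : ν (c • x) = |c| • ν x := by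
      ext i; fin_cases i <;> simp [ν, norm_smul]
    rw [hfν, hfν, hνc, quarticPerturbedForm_smul, sqrt_mul (sq_nonneg _), sqrt_sq (abs_nonneg c)]
  · have hν_nonneg : 0 ≤ ν (x + y) := fun i ↦ by fin_cases i <;> simp [ν]
    have hν_add : ν (x + y) ≤ ν x + ν y := fun i ↦ by
      fin_cases i <;> simp [ν, norm_add_le]
    simpa only [hfν] using
      sqrt_quarticPerturbedForm_le_add (fun i ↦ (ht i).le) hε.le hν_nonneg hν_add
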